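/- arXiv:2205.15669 — 2 statements merged into one kernel-verified Lean document; each statement's English description precedes it below -/
import Mathlib

section
/- Let f : ℝ^d → ℝ be γ-strongly convex and differentiable on a convex set S, and for r > 0 define the Moreau-type envelope h(x) = inf_{y ∈ S} { f(y) + (1/(2r))‖y − x‖² }. Then for every x ∈ S we have f(x) − (r/(2(1+rγ)))‖∇f(x)‖² ≤ h(x) ≤ f(x). -/
/-!
Strong convexity at `x` bounds `f y + ‖y - x‖² / (2r)` below by the quadratic
`f x + ⟪∇f x, y - x⟫ + ((1 + rγ) / (2r)) ‖y - x‖²`, whose minimum over the whole space is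
`f x - r / (2(1 + rγ)) ‖∇f x‖²`; the upper bound is the choice `y = x`.
-/

open RealInnerProductSpace

section

variable {E : Type*} [NormedAddCommGroup E] [InnerProductSpace ℝ E]

theorem neg_norm_sq_div_le_inner_add_mul_norm_sq (g v : E) {c : ℝ} (hc : 0 < c) :
    -(‖g‖ ^ 2 / (4 * c)) ≤ ⟪g, v⟫ + c * ‖v‖ ^ 2 := by
  have hsq : 0 ≤ ‖g + (2 * c) • v‖ ^ 2 := sq_nonneg _
  rw [norm_add_sq_real, inner_smul_right, norm_smul, mul_pow, Real.norm_of_nonneg (by positivity)]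
    at hsq
  rw [neg_le, neg_add', le_div_iff₀ (by positivity)]
  linarith

theorem strong_convex_sub_le_add_norm_sq_div {S : Set E} {f : E → ℝ} {g x : E} {γ r : ℝ}
    (hr : 0 < r) (hrγ : 0 < 1 + r * γ)
    (hstrong : ∀ y ∈ S, f x + ⟪g, y - x⟫ + γ / 2 * ‖y - x‖ ^ 2 ≤ f y) {y : E} (hy : y ∈ S) :
    f x - r / (2 * (1 + r * γ)) * ‖g‖ ^ 2 ≤ f y + 1 / (2 * r) * ‖y - x‖ ^ 2 := by
  have hc : 0 < (1 + r * γ) / (2 * r) := by positivity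
  have hquad := neg_norm_sq_div_le_inner_add_mul_norm_sq g (y - x) hc
  have hmin : ‖g‖ ^ 2 / (4 * ((1 + r * γ) / (2 * r))) = r / (2 * (1 + r * γ)) * ‖g‖ ^ 2 := by
    field_simp
    ring
  have hcoef : (1 + r * γ) / (2 * r) = γ / 2 + 1 / (2 * r) := by
    field_simp
    ring
  rw [hmin, hcoef] at hquad
  linarith [hstrong y hy]

end

theorem moreau_envelope_sandwich_general
    {d : ℕ} (S : Set (EuclideanSpace ℝ (Fin d)))
    (f : EuclideanSpace ℝ (Fin d) → ℝ) (f' : EuclideanSpace ℝ (Fin d) → EuclideanSpace ℝ (Fin d))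
    (γ r : ℝ) (hγ : 0 < γ) (hr : 0 < r)
    (hstrong : ∀ x ∈ S, ∀ y ∈ S,
      f x + inner ℝ (f' x) (y - x) + γ / 2 * ‖y - x‖ ^ 2 ≤ f y)
    (h : EuclideanSpace ℝ (Fin d) → ℝ)
    (hdef : ∀ x, h x = sInf ((fun y => f y + 1 / (2 * r) * ‖y - x‖ ^ 2) '' S)) :
    ∀ x ∈ S,
      f x - r / (2 * (1 + r * γ)) * ‖f' x‖ ^ 2 ≤ h x ∧ h x ≤ f x := by
  intro x hx
  have hlower : ∀ z ∈ (fun y => f y + 1 / (2 * r) * ‖y - x‖ ^ 2) '' S,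
      f x - r / (2 * (1 + r * γ)) * ‖f' x‖ ^ 2 ≤ z := by
    rintro _ ⟨y, hy, rfl⟩
    exact strong_convex_sub_le_add_norm_sq_div hr (by positivity) (hstrong x hx) hy
  have hx_mem : f x ∈ (fun y => f y + 1 / (2 * r) * ‖y - x‖ ^ 2) '' S :=
    ⟨x, hx, by simp⟩
  rw [hdef]
  exact ⟨le_csInf ⟨_, hx_mem⟩ hlower, csInf_le ⟨_, hlower⟩ hx_mem⟩

/-- Moreau-type envelope sandwich for a γ-strongly convex differentiable function on a
convex set `S`. -/
theorem moreau_envelope_sandwich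
    {d : ℕ} (S : Set (EuclideanSpace ℝ (Fin d))) (hS : Convex ℝ S) (hSne : S.Nonempty)
    (f : EuclideanSpace ℝ (Fin d) → ℝ) (f' : EuclideanSpace ℝ (Fin d) → EuclideanSpace ℝ (Fin d))
    (γ r : ℝ) (hγ : 0 < γ) (hr : 0 < r)
    (hdiff : ∀ x ∈ S, HasGradientWithinAt f (f' x) S x)
    (hstrong : ∀ x ∈ S, ∀ y ∈ S,
      f x + inner ℝ (f' x) (y - x) + γ / 2 * ‖y - x‖ ^ 2 ≤ f y)
    (h : EuclideanSpace ℝ (Fin d) → ℝ)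
    (hdef : ∀ x, h x = sInf ((fun y => f y + 1 / (2 * r) * ‖y - x‖ ^ 2) '' S)) :
    ∀ x ∈ S,
      f x - r / (2 * (1 + r * γ)) * ‖f' x‖ ^ 2 ≤ h x ∧ h x ≤ f x :=
  moreau_envelope_sandwich_general S f f' γ r hγ hr hstrong h hdef
end

section
/- Fix γ > 0, a symmetric cost matrix M ∈ ℝ^{d×d}, and q ∈ S₁(d). Define the Fenchel–Legendre dual of entropic OT: W*_{γ,q}(z) = max_{p ∈ S₁(d)} { ⟨z, p⟩ − W_γ(q, p) }. Then W*_{γ,q} is differentiable and its gradient is (1/γ)-Lipschitz in the Euclidean norm, with components [∇W*_{γ,q}(z)]_l = Σ_{j=1}^d [q]_j · exp((z_l − M_{lj})/γ) / Σ_{i=1}^d exp((z_i − M_{ij})/γ); in particular ∇W*_{γ,q}(z) ∈ S₁(d). -/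
open scoped InnerProductSpace

def transportPlansE {d : ℕ} (p q : EuclideanSpace ℝ (Fin d)) :
    Set (Matrix (Fin d) (Fin d) ℝ) :=
  {X | (∀ i j, 0 ≤ X i j) ∧ (∀ i, ∑ j, X i j = p i) ∧ (∀ j, ∑ i, X i j = q j)}

noncomputable def entOTCostE {d : ℕ} (γ : ℝ) (M : Matrix (Fin d) (Fin d) ℝ)
    (q p : EuclideanSpace ℝ (Fin d)) : ℝ :=
  sInf ((fun X : Matrix (Fin d) (Fin d) ℝ =>
    ∑ i, ∑ j, M i j * X i j + γ * ∑ i, ∑ j, X i j * Real.log (X i j)) ''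
      transportPlansE p q)

noncomputable def entOTDual {d : ℕ} (γ : ℝ) (M : Matrix (Fin d) (Fin d) ℝ)
    (q : EuclideanSpace ℝ (Fin d)) (z : EuclideanSpace ℝ (Fin d)) : ℝ :=
  sSup ((fun p => ⟪z, p⟫_ℝ - entOTCostE γ M q p) ''
    {p : EuclideanSpace ℝ (Fin d) | (∀ l, 0 ≤ p l ∧ p l ≤ 1) ∧ ∑ l, p l = 1})

/-!
The supremum defining the dual is computed in closed form. Write `a^j = (z - M_{·j}) / γ`. For a
coupling `X` with row sums `p` and column sums `q`,
`⟪z, p⟫ - ⟨M, X⟩ - γ Σ X log X = γ Σ_j Σ_i X_ij (a^j_i - log X_ij)`, and by the Gibbs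
inequality column `j` contributes at most `q_j (logSumExp a^j - log q_j)`, with equality for
`X_ij = q_j softmax(a^j)_i`, whose row sums are `G z`. Hence the dual is
`γ Σ_j q_j (logSumExp a^j - log q_j)`, whose gradient is `G z = Σ_j q_j softmax(a^j)`.
Softmax is 1-Lipschitz because its Jacobian `diag s - s sᵀ` has operator norm at most 1 when `s`
is a probability vector, so `G`, a `q`-mixture of softmaxes of `γ⁻¹`-Lipschitz maps, is
`γ⁻¹`-Lipschitz.
-/

open Real Finset

section Softmax

variable {ι : Type*} [Fintype ι]

def probSimplex (ι : Type*) [Fintype ι] : Set (EuclideanSpace ℝ ι) :=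
  {p | (∀ l, 0 ≤ p l ∧ p l ≤ 1) ∧ ∑ l, p l = 1}

lemma mem_probSimplex_of_nonneg {p : EuclideanSpace ℝ ι} (hp : ∀ l, 0 ≤ p l)
    (hp1 : ∑ l, p l = 1) : p ∈ probSimplex ι :=
  ⟨fun l => ⟨hp l, hp1 ▸ single_le_sum (fun k _ => hp k) (mem_univ l)⟩, hp1⟩

noncomputable def logSumExp (x : EuclideanSpace ℝ ι) : ℝ := log (∑ i, exp (x i))

noncomputable def softmax (x : EuclideanSpace ℝ ι) : EuclideanSpace ℝ ι :=
  WithLp.toLp 2 fun i => exp (x i) / ∑ k, exp (x k)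

lemma softmax_apply (x : EuclideanSpace ℝ ι) (i : ι) :
    softmax x i = exp (x i) / ∑ k, exp (x k) := rfl

noncomputable def softmaxJacobian [DecidableEq ι] (s : EuclideanSpace ℝ ι) :
    EuclideanSpace ℝ ι →L[ℝ] EuclideanSpace ℝ ι :=
  Matrix.toEuclideanCLM (n := ι) (𝕜 := ℝ)
    (Matrix.diagonal s.ofLp - Matrix.vecMulVec s.ofLp s.ofLp)

lemma softmaxJacobian_apply [DecidableEq ι] (s v : EuclideanSpace ℝ ι) (i : ι) :
    softmaxJacobian s v i = s i * (v i - ∑ k, s k * v k) := by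
  simp only [softmaxJacobian, Matrix.ofLp_toEuclideanCLM, Matrix.sub_mulVec, Pi.sub_apply,
    Matrix.mulVec_diagonal, Matrix.vecMulVec_mulVec, op_smul_eq_smul, Pi.smul_apply, smul_eq_mul,
    dotProduct]
  ring

lemma norm_softmaxJacobian_le [DecidableEq ι] {s : EuclideanSpace ℝ ι}
    (hs : s ∈ probSimplex ι) : ‖softmaxJacobian s‖ ≤ 1 := by
  refine ContinuousLinearMap.opNorm_le_bound _ zero_le_one fun v => ?_
  set m := ∑ k, s k * v k with hm
  have hexpand : ∀ i, s i * (v i - m) ^ 2 = s i * v i ^ 2 - 2 * m * (s i * v i) + m ^ 2 * s i :=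
    fun i => by ring
  rw [one_mul, ← sq_le_sq₀ (norm_nonneg _) (norm_nonneg _), EuclideanSpace.norm_sq_eq,
    EuclideanSpace.norm_sq_eq]
  calc ∑ i, ‖softmaxJacobian s v i‖ ^ 2 = ∑ i, s i ^ 2 * (v i - m) ^ 2 := by
        simp only [softmaxJacobian_apply, norm_mul, mul_pow, norm_eq_abs, sq_abs, m]
    _ ≤ ∑ i, s i * (v i - m) ^ 2 := sum_le_sum fun i _ => by
        gcongr; nlinarith [hs.1 i]
    _ = ∑ i, s i * v i ^ 2 - m ^ 2 := by
        simp only [hexpand, sum_add_distrib, sum_sub_distrib, ← mul_sum, ← hm, hs.2]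
        ring
    _ ≤ ∑ i, s i * v i ^ 2 := sub_le_self _ (sq_nonneg m)
    _ ≤ ∑ i, ‖v i‖ ^ 2 := sum_le_sum fun i _ => by
        rw [norm_eq_abs, sq_abs]
        exact mul_le_of_le_one_left (sq_nonneg _) (hs.1 i).2

variable [Nonempty ι]

lemma sum_exp_pos (x : EuclideanSpace ℝ ι) : 0 < ∑ k, exp (x k) :=
  sum_pos (fun _ _ => exp_pos _) univ_nonempty

lemma softmax_pos (x : EuclideanSpace ℝ ι) (i : ι) : 0 < softmax x i :=
  div_pos (exp_pos _) (sum_exp_pos x)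

lemma sum_softmax (x : EuclideanSpace ℝ ι) : ∑ i, softmax x i = 1 := by
  simp only [softmax_apply, ← sum_div]
  exact div_self (sum_exp_pos x).ne'

lemma softmax_mem_probSimplex (x : EuclideanSpace ℝ ι) : softmax x ∈ probSimplex ι :=
  mem_probSimplex_of_nonneg (fun i => (softmax_pos x i).le) (sum_softmax x)

lemma softmax_eq_exp_sub_logSumExp (x : EuclideanSpace ℝ ι) (i : ι) :
    softmax x i = exp (x i - logSumExp x) := by
  rw [softmax_apply, exp_sub, logSumExp, exp_log (sum_exp_pos x)]

lemma log_softmax (x : EuclideanSpace ℝ ι) (i : ι) :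
    log (softmax x i) = x i - logSumExp x := by
  rw [softmax_eq_exp_sub_logSumExp, log_exp]

theorem hasGradientAt_logSumExp (x : EuclideanSpace ℝ ι) :
    HasGradientAt logSumExp (softmax x) x := by
  rw [hasGradientAt_iff_hasFDerivAt]
  have hsum := HasFDerivAt.fun_sum (u := univ) fun i _ =>
    (PiLp.hasFDerivAt_apply (𝕜 := ℝ) 2 x i).exp
  refine (hsum.log (sum_exp_pos x).ne').congr_fderiv ?_
  ext v
  simp only [_root_.sum_apply, smul_apply, PiLp.proj_apply, smul_eq_mul, mul_sum,
    InnerProductSpace.toDual_apply_apply, PiLp.inner_apply, RCLike.inner_apply,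
    conj_trivial, softmax_apply, div_eq_inv_mul]
  exact sum_congr rfl fun i _ => by ring

theorem hasFDerivAt_softmax [DecidableEq ι] (x : EuclideanSpace ℝ ι) :
    HasFDerivAt softmax (softmaxJacobian (softmax x)) x := by
  rw [← hasFDerivWithinAt_univ, hasFDerivWithinAt_piLp]
  intro i
  have h : HasFDerivAt (fun y => softmax y i)
      (softmax x i • (PiLp.proj 2 _ i - InnerProductSpace.toDual ℝ _ (softmax x))) x := by
    simp only [softmax_eq_exp_sub_logSumExp]
    exact ((PiLp.hasFDerivAt_apply 2 x i).fun_sub (hasGradientAt_logSumExp x).hasFDerivAt).exp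
  refine h.hasFDerivWithinAt.congr_fderiv ?_
  ext v
  simp [softmaxJacobian_apply, PiLp.inner_apply, mul_comm]

theorem lipschitzWith_one_softmax :
    LipschitzWith 1 (softmax : EuclideanSpace ℝ ι → EuclideanSpace ℝ ι) := by
  classical
  refine lipschitzWith_of_nnnorm_fderiv_le (fun x => (hasFDerivAt_softmax x).differentiableAt)
    fun x => ?_
  rw [(hasFDerivAt_softmax x).fderiv, ← NNReal.coe_le_coe, coe_nnnorm, NNReal.coe_one]
  exact norm_softmaxJacobian_le (softmax_mem_probSimplex x)

lemma mul_sub_log_le_sub {x y : ℝ} (hx : 0 ≤ x) (hy : 0 < y) :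
    x * (log y - log x) ≤ y - x := by
  rcases hx.eq_or_lt with rfl | hx
  · simpa using hy.le
  have h := log_le_sub_one_of_pos (div_pos hy hx)
  rw [log_div hy.ne' hx.ne'] at h
  calc x * (log y - log x) ≤ x * (y / x - 1) := mul_le_mul_of_nonneg_left h hx.le
    _ = y - x := by field_simp

theorem sum_mul_sub_log_le (x : ι → ℝ) (hx : ∀ i, 0 ≤ x i) (a : EuclideanSpace ℝ ι) :
    ∑ i, x i * (a i - log (x i)) ≤ (∑ i, x i) * (logSumExp a - log (∑ i, x i)) := by
  set c := ∑ i, x i with hc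
  rcases (sum_nonneg fun i _ => hx i : 0 ≤ c).eq_or_lt with hc0 | hc0
  · have hx0 : ∀ i, x i = 0 := fun i =>
      (sum_eq_zero_iff_of_nonneg fun i _ => hx i).1 hc0.symm i (mem_univ i)
    simp [hx0, hc]
  have hterm : ∀ i, x i * (a i - log (x i)) + x i * (log c - logSumExp a)
      ≤ c * softmax a i - x i := fun i => by
    have h := mul_sub_log_le_sub (hx i) (mul_pos hc0 (softmax_pos a i))
    rw [log_mul hc0.ne' (softmax_pos a i).ne', log_softmax] at h
    linarith
  have h := sum_le_sum fun i (_ : i ∈ univ) => hterm i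
  rw [sum_add_distrib, ← sum_mul, sum_sub_distrib, ← mul_sum, sum_softmax, ← hc] at h
  linarith

theorem sum_mul_softmax_mul_sub_log {c : ℝ} (hc : 0 ≤ c) (a : EuclideanSpace ℝ ι) :
    ∑ i, c * softmax a i * (a i - log (c * softmax a i)) = c * (logSumExp a - log c) := by
  rcases hc.eq_or_lt with rfl | hc
  · simp
  have hterm : ∀ i, c * softmax a i * (a i - log (c * softmax a i))
      = c * (logSumExp a - log c) * softmax a i := fun i => by
    rw [log_mul hc.ne' (softmax_pos a i).ne', log_softmax]
    ring
  rw [sum_congr rfl fun i _ => hterm i, ← mul_sum, sum_softmax, mul_one]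

end Softmax

section EntropicOT

variable {d : ℕ} {γ : ℝ} {M : Matrix (Fin d) (Fin d) ℝ} {p q : EuclideanSpace ℝ (Fin d)}

noncomputable def entOTObjective (γ : ℝ) (M X : Matrix (Fin d) (Fin d) ℝ) : ℝ :=
  ∑ i, ∑ j, M i j * X i j + γ * ∑ i, ∑ j, X i j * log (X i j)

lemma entOTCostE_eq_sInf :
    entOTCostE γ M q p = sInf (entOTObjective γ M '' transportPlansE p q) := rfl

lemma vecMulVec_mem_transportPlansE (hp : p ∈ probSimplex (Fin d))
    (hq : q ∈ probSimplex (Fin d)) : Matrix.vecMulVec p.ofLp q.ofLp ∈ transportPlansE p q := by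
  refine ⟨fun i j => mul_nonneg (hp.1 i).1 (hq.1 j).1, fun i => ?_, fun j => ?_⟩
  · simp only [Matrix.vecMulVec_apply, ← mul_sum, hq.2, mul_one]
  · simp only [Matrix.vecMulVec_apply, ← sum_mul, hp.2, one_mul]

noncomputable def entOTLogits (γ : ℝ) (M : Matrix (Fin d) (Fin d) ℝ) (j : Fin d)
    (z : EuclideanSpace ℝ (Fin d)) : EuclideanSpace ℝ (Fin d) :=
  γ⁻¹ • (z - WithLp.toLp 2 fun i => M i j)

lemma entOTLogits_apply (j : Fin d) (z : EuclideanSpace ℝ (Fin d)) (i : Fin d) :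
    entOTLogits γ M j z i = (z i - M i j) / γ := by
  simp [entOTLogits, div_eq_inv_mul]

noncomputable def entOTDualFormula (γ : ℝ) (M : Matrix (Fin d) (Fin d) ℝ)
    (q z : EuclideanSpace ℝ (Fin d)) : ℝ :=
  ∑ j, γ * q j * (logSumExp (entOTLogits γ M j z) - log (q j))

noncomputable def entOTDualGrad (γ : ℝ) (M : Matrix (Fin d) (Fin d) ℝ)
    (q z : EuclideanSpace ℝ (Fin d)) : EuclideanSpace ℝ (Fin d) :=
  ∑ j, q j • softmax (entOTLogits γ M j z)

lemma entOTDualGrad_apply (z : EuclideanSpace ℝ (Fin d)) (l : Fin d) :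
    entOTDualGrad γ M q z l = ∑ j, q j * softmax (entOTLogits γ M j z) l := by
  simp [entOTDualGrad]

noncomputable def entOTOptimalPlan (γ : ℝ) (M : Matrix (Fin d) (Fin d) ℝ)
    (q z : EuclideanSpace ℝ (Fin d)) : Matrix (Fin d) (Fin d) ℝ :=
  fun i j => q j * softmax (entOTLogits γ M j z) i

lemma inner_sub_entOTObjective (hγ : γ ≠ 0) {X : Matrix (Fin d) (Fin d) ℝ}
    (hX : ∀ i, ∑ j, X i j = p i) (z : EuclideanSpace ℝ (Fin d)) :
    ⟪z, p⟫_ℝ - entOTObjective γ M X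
      = γ * ∑ j, ∑ i, X i j * (entOTLogits γ M j z i - log (X i j)) := by
  simp only [PiLp.inner_apply, RCLike.inner_apply, conj_trivial, ← hX, entOTObjective,
    entOTLogits_apply]
  conv_rhs => rw [sum_comm]
  simp only [mul_sum, sum_mul, ← sum_add_distrib, ← sum_sub_distrib]
  refine sum_congr rfl fun i _ => sum_congr rfl fun j _ => ?_
  field_simp
  ring

variable [NeZero d]

lemma entOTDualGrad_mem_probSimplex (hq : q ∈ probSimplex (Fin d))
    (z : EuclideanSpace ℝ (Fin d)) : entOTDualGrad γ M q z ∈ probSimplex (Fin d) := by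
  refine mem_probSimplex_of_nonneg (fun l => ?_) ?_
  · rw [entOTDualGrad_apply]
    exact sum_nonneg fun j _ => mul_nonneg (hq.1 j).1 (softmax_pos _ l).le
  · simp only [entOTDualGrad_apply]
    rw [sum_comm]
    simp only [← mul_sum, sum_softmax, mul_one, hq.2]

lemma entOTOptimalPlan_mem_transportPlansE (hq : ∀ j, 0 ≤ q j)
    (z : EuclideanSpace ℝ (Fin d)) :
    entOTOptimalPlan γ M q z ∈ transportPlansE (entOTDualGrad γ M q z) q := by
  refine ⟨fun i j => mul_nonneg (hq j) (softmax_pos _ i).le,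
    fun i => (entOTDualGrad_apply z i).symm, fun j => ?_⟩
  simp only [entOTOptimalPlan, ← mul_sum, sum_softmax, mul_one]

lemma inner_sub_entOTObjective_le (hγ : 0 < γ) {X : Matrix (Fin d) (Fin d) ℝ}
    (hX : X ∈ transportPlansE p q) (z : EuclideanSpace ℝ (Fin d)) :
    ⟪z, p⟫_ℝ - entOTObjective γ M X ≤ entOTDualFormula γ M q z := by
  obtain ⟨hX0, hrow, hcol⟩ := hX
  rw [inner_sub_entOTObjective hγ.ne' hrow, entOTDualFormula, mul_sum]
  refine sum_le_sum fun j _ => ?_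
  have h := sum_mul_sub_log_le (fun i => X i j) (fun i => hX0 i j) (entOTLogits γ M j z)
  rw [hcol j] at h
  rw [mul_assoc]
  exact mul_le_mul_of_nonneg_left h hγ.le

lemma inner_sub_entOTObjective_entOTOptimalPlan (hγ : γ ≠ 0) (hq : ∀ j, 0 ≤ q j)
    (z : EuclideanSpace ℝ (Fin d)) :
    ⟪z, entOTDualGrad γ M q z⟫_ℝ - entOTObjective γ M (entOTOptimalPlan γ M q z)
      = entOTDualFormula γ M q z := by
  rw [inner_sub_entOTObjective hγ (entOTOptimalPlan_mem_transportPlansE hq z).2.1,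
    entOTDualFormula, mul_sum]
  refine sum_congr rfl fun j _ => ?_
  rw [mul_assoc, ← sum_mul_softmax_mul_sub_log (hq j)]
  rfl

lemma entOTCostE_entOTDualGrad (hγ : 0 < γ) (hq : ∀ j, 0 ≤ q j)
    (z : EuclideanSpace ℝ (Fin d)) :
    entOTCostE γ M q (entOTDualGrad γ M q z)
      = ⟪z, entOTDualGrad γ M q z⟫_ℝ - entOTDualFormula γ M q z := by
  rw [entOTCostE_eq_sInf]
  refine IsLeast.csInf_eq ⟨⟨_, entOTOptimalPlan_mem_transportPlansE hq z, ?_⟩, ?_⟩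
  · linarith [inner_sub_entOTObjective_entOTOptimalPlan (M := M) hγ.ne' hq z]
  · rintro _ ⟨X, hX, rfl⟩
    linarith [inner_sub_entOTObjective_le (M := M) hγ hX z]

theorem entOTDual_eq_entOTDualFormula (hγ : 0 < γ) (hq : q ∈ probSimplex (Fin d))
    (z : EuclideanSpace ℝ (Fin d)) : entOTDual γ M q z = entOTDualFormula γ M q z := by
  have hq0 : ∀ j, 0 ≤ q j := fun j => (hq.1 j).1
  refine IsGreatest.csSup_eq
    ⟨⟨entOTDualGrad γ M q z, entOTDualGrad_mem_probSimplex hq z, ?_⟩, ?_⟩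
  · dsimp only
    rw [entOTCostE_entOTDualGrad hγ hq0]
    ring
  · rintro _ ⟨p, hp, rfl⟩
    have hcost : ⟪z, p⟫_ℝ - entOTDualFormula γ M q z ≤ entOTCostE γ M q p := by
      rw [entOTCostE_eq_sInf]
      refine le_csInf ⟨_, _, vecMulVec_mem_transportPlansE hp hq, rfl⟩ ?_
      rintro _ ⟨X, hX, rfl⟩
      linarith [inner_sub_entOTObjective_le (M := M) hγ hX z]
    linarith

theorem hasGradientAt_entOTDualFormula (hγ : γ ≠ 0) (z : EuclideanSpace ℝ (Fin d)) :
    HasGradientAt (entOTDualFormula γ M q) (entOTDualGrad γ M q z) z := by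
  rw [hasGradientAt_iff_hasFDerivAt]
  have hlogits : ∀ j,
      HasFDerivAt (entOTLogits γ M j) (γ⁻¹ • ContinuousLinearMap.id ℝ _) z :=
    fun j => ((hasFDerivAt_id z).sub_const _).const_smul γ⁻¹
  have hterm := fun j => (((hasGradientAt_logSumExp _).hasFDerivAt.comp z
    (hlogits j)).sub_const (log (q j))).const_mul (γ * q j)
  refine (HasFDerivAt.fun_sum (u := univ) fun j _ => hterm j).congr_fderiv ?_
  ext v
  simp only [ContinuousLinearMap.comp_smulₛₗ, map_inv₀, ringHom_apply,
    ContinuousLinearMap.comp_id, _root_.sum_apply, smul_apply, InnerProductSpace.toDual_apply_apply,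
    smul_eq_mul, entOTDualGrad, map_sum, map_smul]
  refine sum_congr rfl fun j _ => ?_
  field_simp

lemma norm_entOTDualGrad_sub_le (hγ : 0 < γ) (hq : q ∈ probSimplex (Fin d))
    (z w : EuclideanSpace ℝ (Fin d)) :
    ‖entOTDualGrad γ M q z - entOTDualGrad γ M q w‖ ≤ γ⁻¹ * ‖z - w‖ := by
  have hlogits : ∀ j, ‖entOTLogits γ M j z - entOTLogits γ M j w‖ = γ⁻¹ * ‖z - w‖ := by
    intro j
    rw [entOTLogits, entOTLogits, ← smul_sub, sub_sub_sub_cancel_right, norm_smul, norm_inv,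
      norm_of_nonneg hγ.le]
  calc ‖entOTDualGrad γ M q z - entOTDualGrad γ M q w‖
      = ‖∑ j, q j • (softmax (entOTLogits γ M j z) - softmax (entOTLogits γ M j w))‖ := by
        simp only [entOTDualGrad, ← sum_sub_distrib, smul_sub]
    _ ≤ ∑ j, ‖q j • (softmax (entOTLogits γ M j z) - softmax (entOTLogits γ M j w))‖ :=
        norm_sum_le _ _
    _ ≤ ∑ j, q j * (γ⁻¹ * ‖z - w‖) := sum_le_sum fun j _ => by
        rw [norm_smul, norm_of_nonneg (hq.1 j).1, ← hlogits j]
        gcongr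
        · exact (hq.1 j).1
        simpa using lipschitzWith_one_softmax.norm_sub_le
          (entOTLogits γ M j z) (entOTLogits γ M j w)
    _ = γ⁻¹ * ‖z - w‖ := by rw [← sum_mul, hq.2, one_mul]

end EntropicOT

theorem entOTDual_gradient_general {d : ℕ} (hd : 0 < d)
    (γ : ℝ) (hγ : 0 < γ)
    (M : Matrix (Fin d) (Fin d) ℝ)
    (q : EuclideanSpace ℝ (Fin d)) (hq : (∀ l, 0 ≤ q l ∧ q l ≤ 1) ∧ ∑ l, q l = 1)
    (G : EuclideanSpace ℝ (Fin d) → EuclideanSpace ℝ (Fin d))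
    (hG : ∀ z l, G z l = ∑ j, q j * (Real.exp ((z l - M l j) / γ) /
      ∑ i, Real.exp ((z i - M i j) / γ))) :
    (∀ z, HasGradientAt (entOTDual γ M q) (G z) z) ∧
    (∀ z w, ‖G z - G w‖ ≤ 1 / γ * ‖z - w‖) ∧
    (∀ z, (∀ l, 0 ≤ G z l ∧ G z l ≤ 1) ∧ ∑ l, G z l = 1) := by
  have : NeZero d := ⟨hd.ne'⟩
  obtain rfl : G = entOTDualGrad γ M q := funext fun z => PiLp.ext fun l => by
    simp only [hG, entOTDualGrad_apply, softmax_apply, entOTLogits_apply]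
  have hdual : entOTDual γ M q = entOTDualFormula γ M q :=
    funext (entOTDual_eq_entOTDualFormula hγ hq)
  refine ⟨fun z => hdual ▸ hasGradientAt_entOTDualFormula hγ.ne' z, fun z w => ?_,
    entOTDualGrad_mem_probSimplex hq⟩
  rw [one_div]
  exact norm_entOTDualGrad_sub_le hγ hq z w

/-- The dual of entropic OT is differentiable with `(1/γ)`-Lipschitz gradient given by
the softmax-mixture formula, and the gradient lies in the simplex. -/
theorem entOTDual_gradient {d : ℕ} (hd : 0 < d)
    (γ : ℝ) (hγ : 0 < γ)
    (M : Matrix (Fin d) (Fin d) ℝ) (hMsymm : M.IsSymm)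
    (q : EuclideanSpace ℝ (Fin d)) (hq : (∀ l, 0 ≤ q l ∧ q l ≤ 1) ∧ ∑ l, q l = 1)
    (G : EuclideanSpace ℝ (Fin d) → EuclideanSpace ℝ (Fin d))
    (hG : ∀ z l, G z l = ∑ j, q j * (Real.exp ((z l - M l j) / γ) /
      ∑ i, Real.exp ((z i - M i j) / γ))) :
    (∀ z, HasGradientAt (entOTDual γ M q) (G z) z) ∧
    (∀ z w, ‖G z - G w‖ ≤ 1 / γ * ‖z - w‖) ∧
    (∀ z, (∀ l, 0 ≤ G z l ∧ G z l ≤ 1) ∧ ∑ l, G z l = 1) :=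
  entOTDual_gradient_general hd γ hγ M q hq G hG
end
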